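/- arXiv:1810.12625 — 10 statements merged into one kernel-verified Lean document; each statement's English description precedes it below -/
import Mathlib

section
/- Under condition (Ω), the maximum of the four values b₁b₂b₃−b₁a₂a₃−b₁b₂a₃, a₁a₂b₃−a₁a₂a₃−b₁a₂a₃, b₁a₂b₃−2b₁a₂a₃, and a₁b₂b₃−b₁b₂a₃−a₁a₂a₃ equals b₁b₂b₃−b₁a₂a₃−b₁b₂a₃. -/
theorem lem_z1
    (a₁ a₂ a₃ b₁ b₂ b₃ : ℝ)
    (ha₁ : 0 ≤ a₁) (ha₂ : 0 ≤ a₂) (ha₃ : 0 ≤ a₃)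
    (hab₁ : a₁ < b₁) (hab₂ : a₂ < b₂) (hab₃ : a₃ < b₃)
    (hΩ₁ : a₁*b₂*b₃ + b₁*a₂*a₃ ≤ b₁*a₂*b₃ + a₁*b₂*a₃)
    (hΩ₂ : b₁*a₂*b₃ + a₁*b₂*a₃ ≤ b₁*b₂*a₃ + a₁*a₂*b₃) :
    max (max (b₁*b₂*b₃ - b₁*a₂*a₃ - b₁*b₂*a₃) (a₁*a₂*b₃ - a₁*a₂*a₃ - b₁*a₂*a₃)) (max (b₁*a₂*b₃ - 2*(b₁*a₂*a₃)) (a₁*b₂*b₃ - b₁*b₂*a₃ - a₁*a₂*a₃)) = b₁*b₂*b₃ - b₁*a₂*a₃ - b₁*b₂*a₃ := by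
  have h1 : a₁*a₂*b₃ - a₁*a₂*a₃ - b₁*a₂*a₃ ≤ b₁*b₂*b₃ - b₁*a₂*a₃ - b₁*b₂*a₃ := by
    nlinarith [mul_nonneg (mul_nonneg (sub_nonneg.2 hab₁.le) (sub_nonneg.2 hab₂.le)) (sub_nonneg.2 hab₃.le), mul_nonneg (mul_nonneg ha₁ ha₂) (sub_nonneg.2 hab₃.le), mul_nonneg (mul_nonneg (sub_nonneg.2 hab₁.le) ha₂) (sub_nonneg.2 hab₃.le), mul_nonneg (mul_nonneg ha₁ (sub_nonneg.2 hab₂.le)) (sub_nonneg.2 hab₃.le)]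
  have h2 : b₁*a₂*b₃ - 2*(b₁*a₂*a₃) ≤ b₁*b₂*b₃ - b₁*a₂*a₃ - b₁*b₂*a₃ := by
    nlinarith [mul_nonneg (mul_nonneg (ha₁.trans hab₁.le) (sub_nonneg.2 hab₂.le)) (sub_nonneg.2 hab₃.le)]
  have h3 : a₁*b₂*b₃ - b₁*b₂*a₃ - a₁*a₂*a₃ ≤ b₁*b₂*b₃ - b₁*a₂*a₃ - b₁*b₂*a₃ := by
    nlinarith [mul_nonneg (sub_nonneg.2 hab₁.le) (by nlinarith : (0:ℝ) ≤ b₂*b₃ - a₂*a₃)]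
  rw [max_eq_left h1, max_eq_left (max_le h2 h3)]
end

section
/- Under condition (Ω), the maximum of the four values b₁b₂b₃−a₁b₂a₃−b₁b₂a₃, a₁a₂b₃−a₁b₂a₃−a₁a₂a₃, b₁a₂b₃−b₁b₂a₃−a₁a₂a₃, and a₁b₂b₃−2a₁b₂a₃ equals b₁b₂b₃−a₁b₂a₃−b₁b₂a₃. -/
theorem lem_z2
    (a₁ a₂ a₃ b₁ b₂ b₃ : ℝ)
    (ha₁ : 0 ≤ a₁) (ha₂ : 0 ≤ a₂) (ha₃ : 0 ≤ a₃)
    (hab₁ : a₁ < b₁) (hab₂ : a₂ < b₂) (hab₃ : a₃ < b₃)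
    (hΩ₁ : a₁*b₂*b₃ + b₁*a₂*a₃ ≤ b₁*a₂*b₃ + a₁*b₂*a₃)
    (hΩ₂ : b₁*a₂*b₃ + a₁*b₂*a₃ ≤ b₁*b₂*a₃ + a₁*a₂*b₃) :
    max (max (b₁*b₂*b₃ - a₁*b₂*a₃ - b₁*b₂*a₃) (a₁*a₂*b₃ - a₁*b₂*a₃ - a₁*a₂*a₃)) (max (b₁*a₂*b₃ - b₁*b₂*a₃ - a₁*a₂*a₃) (a₁*b₂*b₃ - 2*(a₁*b₂*a₃))) = b₁*b₂*b₃ - a₁*b₂*a₃ - b₁*b₂*a₃ := by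
  have h2 : a₁*a₂*b₃ - a₁*b₂*a₃ - a₁*a₂*a₃ ≤ b₁*b₂*b₃ - a₁*b₂*a₃ - b₁*b₂*a₃ := by
    nlinarith [mul_nonneg (mul_nonneg (sub_nonneg.2 hab₁.le) (sub_nonneg.2 hab₂.le)) (sub_nonneg.2 hab₃.le), mul_nonneg ha₁ ha₂, mul_nonneg (sub_nonneg.2 hab₃.le) (mul_nonneg ha₂ (sub_nonneg.2 hab₁.le)), mul_nonneg (sub_nonneg.2 hab₃.le) (mul_nonneg ha₁ (sub_nonneg.2 hab₂.le))]
  have h3 : b₁*a₂*b₃ - b₁*b₂*a₃ - a₁*a₂*a₃ ≤ b₁*b₂*b₃ - a₁*b₂*a₃ - b₁*b₂*a₃ := by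
    nlinarith [mul_nonneg (sub_nonneg.2 hab₃.le) (mul_nonneg ha₂ (sub_nonneg.2 hab₁.le)), mul_nonneg (sub_nonneg.2 hab₃.le) (mul_nonneg ha₁ (sub_nonneg.2 hab₂.le))]
  have h4 : a₁*b₂*b₃ - 2*(a₁*b₂*a₃) ≤ b₁*b₂*b₃ - a₁*b₂*a₃ - b₁*b₂*a₃ := by
    nlinarith [mul_nonneg (mul_nonneg (ha₂.trans hab₂.le) (sub_nonneg.2 hab₁.le)) (sub_nonneg.2 hab₃.le)]
  rw [max_eq_left h2, max_eq_left (max_le h3 h4)]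
end

section
/- Under condition (Ω), the maximum of the four values 2b₁b₂a₃−b₁b₂b₃, a₁b₂a₃+b₁a₂a₃−a₁a₂b₃, b₁a₂a₃+b₁b₂a₃−b₁a₂b₃, and a₁b₂a₃+b₁b₂a₃−a₁b₂b₃ equals a₁b₂a₃+b₁b₂a₃−a₁b₂b₃. -/
theorem lem_z3
    (a₁ a₂ a₃ b₁ b₂ b₃ : ℝ)
    (ha₁ : 0 ≤ a₁) (ha₂ : 0 ≤ a₂) (ha₃ : 0 ≤ a₃)
    (hab₁ : a₁ < b₁) (hab₂ : a₂ < b₂) (hab₃ : a₃ < b₃)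
    (hΩ₁ : a₁*b₂*b₃ + b₁*a₂*a₃ ≤ b₁*a₂*b₃ + a₁*b₂*a₃)
    (hΩ₂ : b₁*a₂*b₃ + a₁*b₂*a₃ ≤ b₁*b₂*a₃ + a₁*a₂*b₃) :
    max (max (2*(b₁*b₂*a₃) - b₁*b₂*b₃) (a₁*b₂*a₃ + b₁*a₂*a₃ - a₁*a₂*b₃)) (max (b₁*a₂*a₃ + b₁*b₂*a₃ - b₁*a₂*b₃) (a₁*b₂*a₃ + b₁*b₂*a₃ - a₁*b₂*b₃)) = a₁*b₂*a₃ + b₁*b₂*a₃ - a₁*b₂*b₃ := by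
  have h1 : 2*(b₁*b₂*a₃) - b₁*b₂*b₃ ≤ a₁*b₂*a₃ + b₁*b₂*a₃ - a₁*b₂*b₃ := by
    nlinarith [mul_nonneg (mul_nonneg (sub_nonneg.mpr hab₁.le) (le_trans ha₂ hab₂.le)) (sub_nonneg.mpr hab₃.le)]
  have h2 : a₁*b₂*a₃ + b₁*a₂*a₃ - a₁*a₂*b₃ ≤ a₁*b₂*a₃ + b₁*b₂*a₃ - a₁*b₂*b₃ := by
    linarith
  have h3 : b₁*a₂*a₃ + b₁*b₂*a₃ - b₁*a₂*b₃ ≤ a₁*b₂*a₃ + b₁*b₂*a₃ - a₁*b₂*b₃ := by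
    have hab : a₁*b₂ ≤ b₁*a₂ := by nlinarith
    nlinarith [mul_nonneg (sub_nonneg.mpr hab) (sub_nonneg.mpr hab₃.le)]
  rw [max_eq_right h3]
  exact max_eq_right (max_le h1 h2)
end

section
/- Under condition (Ω), the maximum of the four values a₁b₂a₃+b₁a₂a₃−b₁b₂b₃, 2a₁a₂a₃−a₁a₂b₃, a₁a₂a₃+b₁a₂a₃−b₁a₂b₃, and a₁a₂a₃+a₁b₂a₃−a₁b₂b₃ equals 2a₁a₂a₃−a₁a₂b₃. -/
theorem lem_z4
    (a₁ a₂ a₃ b₁ b₂ b₃ : ℝ)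
    (ha₁ : 0 ≤ a₁) (ha₂ : 0 ≤ a₂) (ha₃ : 0 ≤ a₃)
    (hab₁ : a₁ < b₁) (hab₂ : a₂ < b₂) (hab₃ : a₃ < b₃)
    (hΩ₁ : a₁*b₂*b₃ + b₁*a₂*a₃ ≤ b₁*a₂*b₃ + a₁*b₂*a₃)
    (hΩ₂ : b₁*a₂*b₃ + a₁*b₂*a₃ ≤ b₁*b₂*a₃ + a₁*a₂*b₃) :
    max (max (a₁*b₂*a₃ + b₁*a₂*a₃ - b₁*b₂*b₃) (2*(a₁*a₂*a₃) - a₁*a₂*b₃)) (max (a₁*a₂*a₃ + b₁*a₂*a₃ - b₁*a₂*b₃) (a₁*a₂*a₃ + a₁*b₂*a₃ - a₁*b₂*b₃)) = 2*(a₁*a₂*a₃) - a₁*a₂*b₃ := by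
  have h1 : a₁*b₂*a₃ + b₁*a₂*a₃ - b₁*b₂*b₃ ≤ 2*(a₁*a₂*a₃) - a₁*a₂*b₃ := by
    nlinarith [mul_nonneg (mul_nonneg (sub_nonneg.2 hab₁.le) (sub_nonneg.2 hab₂.le)) (sub_nonneg.2 hab₃.le), mul_nonneg (mul_nonneg ha₁ (sub_nonneg.2 hab₂.le)) (sub_nonneg.2 hab₃.le), mul_nonneg (mul_nonneg (sub_nonneg.2 hab₁.le) ha₂) (sub_nonneg.2 hab₃.le), mul_nonneg (mul_nonneg ha₁ ha₂) (sub_nonneg.2 hab₃.le)]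
  have h3 : a₁*a₂*a₃ + b₁*a₂*a₃ - b₁*a₂*b₃ ≤ 2*(a₁*a₂*a₃) - a₁*a₂*b₃ := by
    nlinarith [mul_nonneg (mul_nonneg (sub_nonneg.2 hab₁.le) ha₂) (sub_nonneg.2 hab₃.le)]
  have h4 : a₁*a₂*a₃ + a₁*b₂*a₃ - a₁*b₂*b₃ ≤ 2*(a₁*a₂*a₃) - a₁*a₂*b₃ := by
    nlinarith [mul_nonneg (mul_nonneg ha₁ (sub_nonneg.2 hab₂.le)) (sub_nonneg.2 hab₃.le)]
  rw [max_eq_right h1, max_eq_left (max_le h3 h4)]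
end

section
/- Under condition (Ω), the maximum of the four values b₁b₂a₃−b₁a₂b₃−b₁b₂b₃, a₁a₂a₃−a₁a₂b₃−b₁a₂b₃, b₁a₂a₃−2b₁a₂b₃, and a₁b₂a₃−a₁a₂b₃−b₁b₂b₃ equals a₁a₂a₃−a₁a₂b₃−b₁a₂b₃. -/
theorem lem_z5
    (a₁ a₂ a₃ b₁ b₂ b₃ : ℝ)
    (ha₁ : 0 ≤ a₁) (ha₂ : 0 ≤ a₂) (ha₃ : 0 ≤ a₃)
    (hab₁ : a₁ < b₁) (hab₂ : a₂ < b₂) (hab₃ : a₃ < b₃)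
    (hΩ₁ : a₁*b₂*b₃ + b₁*a₂*a₃ ≤ b₁*a₂*b₃ + a₁*b₂*a₃)
    (hΩ₂ : b₁*a₂*b₃ + a₁*b₂*a₃ ≤ b₁*b₂*a₃ + a₁*a₂*b₃) :
    max (max (b₁*b₂*a₃ - b₁*a₂*b₃ - b₁*b₂*b₃) (a₁*a₂*a₃ - a₁*a₂*b₃ - b₁*a₂*b₃)) (max (b₁*a₂*a₃ - 2*(b₁*a₂*b₃)) (a₁*b₂*a₃ - a₁*a₂*b₃ - b₁*b₂*b₃)) = a₁*a₂*a₃ - a₁*a₂*b₃ - b₁*a₂*b₃ := by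
  have h12 : a₁*a₂ ≤ b₁*b₂ := mul_le_mul hab₁.le hab₂.le ha₂ (ha₁.trans hab₁.le)
  have h13 : a₁*a₃ ≤ b₁*b₃ := mul_le_mul hab₁.le hab₃.le ha₃ (ha₁.trans hab₁.le)
  have hA : b₁*b₂*a₃ - b₁*a₂*b₃ - b₁*b₂*b₃ ≤ a₁*a₂*a₃ - a₁*a₂*b₃ - b₁*a₂*b₃ := by
    nlinarith [mul_nonneg (sub_nonneg.2 h12) (sub_pos.2 hab₃).le]
  have hC : b₁*a₂*a₃ - 2*(b₁*a₂*b₃) ≤ a₁*a₂*a₃ - a₁*a₂*b₃ - b₁*a₂*b₃ := by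
    nlinarith [mul_nonneg (mul_nonneg ha₂ (sub_pos.2 hab₁).le) (sub_pos.2 hab₃).le]
  have hD : a₁*b₂*a₃ - a₁*a₂*b₃ - b₁*b₂*b₃ ≤ a₁*a₂*a₃ - a₁*a₂*b₃ - b₁*a₂*b₃ := by
    nlinarith [mul_nonneg (sub_pos.2 hab₂).le (sub_nonneg.2 h13)]
  rw [max_eq_right hA, max_eq_left (max_le hC hD)]
end

section
/- Under condition (Ω), the maximum of the four values b₁b₂a₃−a₁b₂b₃−b₁b₂b₃, a₁a₂a₃−a₁a₂b₃−a₁b₂b₃, b₁a₂a₃−b₁b₂b₃−a₁a₂b₃, and a₁b₂a₃−2a₁b₂b₃ equals a₁a₂a₃−a₁a₂b₃−a₁b₂b₃. -/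
theorem lem_z6
    (a₁ a₂ a₃ b₁ b₂ b₃ : ℝ)
    (ha₁ : 0 ≤ a₁) (ha₂ : 0 ≤ a₂) (ha₃ : 0 ≤ a₃)
    (hab₁ : a₁ < b₁) (hab₂ : a₂ < b₂) (hab₃ : a₃ < b₃)
    (hΩ₁ : a₁*b₂*b₃ + b₁*a₂*a₃ ≤ b₁*a₂*b₃ + a₁*b₂*a₃)
    (hΩ₂ : b₁*a₂*b₃ + a₁*b₂*a₃ ≤ b₁*b₂*a₃ + a₁*a₂*b₃) :
    max (max (b₁*b₂*a₃ - a₁*b₂*b₃ - b₁*b₂*b₃) (a₁*a₂*a₃ - a₁*a₂*b₃ - a₁*b₂*b₃)) (max (b₁*a₂*a₃ - b₁*b₂*b₃ - a₁*a₂*b₃) (a₁*b₂*a₃ - 2*(a₁*b₂*b₃))) = a₁*a₂*a₃ - a₁*a₂*b₃ - a₁*b₂*b₃ := by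
  have hA : b₁*b₂*a₃ - a₁*b₂*b₃ - b₁*b₂*b₃ ≤ a₁*a₂*a₃ - a₁*a₂*b₃ - a₁*b₂*b₃ := by
    nlinarith [mul_pos (sub_pos.2 hab₁) (sub_pos.2 hab₂), sub_pos.2 hab₃,
      mul_nonneg ha₁ (sub_pos.2 hab₂).le, mul_nonneg (sub_pos.2 hab₁).le ha₂]
  have hC : b₁*a₂*a₃ - b₁*b₂*b₃ - a₁*a₂*b₃ ≤ a₁*a₂*a₃ - a₁*a₂*b₃ - a₁*b₂*b₃ := by
    nlinarith [mul_nonneg (mul_nonneg ha₂ ha₃) (sub_pos.2 hab₁).le,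
      mul_nonneg (mul_nonneg ha₂ (sub_pos.2 hab₃).le) (sub_pos.2 hab₁).le,
      mul_nonneg (mul_nonneg (sub_pos.2 hab₂).le (le_trans ha₃ hab₃.le)) (sub_pos.2 hab₁).le]
  have hD : a₁*b₂*a₃ - 2*(a₁*b₂*b₃) ≤ a₁*a₂*a₃ - a₁*a₂*b₃ - a₁*b₂*b₃ := by
    nlinarith [mul_nonneg (mul_nonneg ha₁ (sub_pos.2 hab₂).le) (sub_pos.2 hab₃).le]
  rw [max_eq_right hA, max_eq_left (max_le hC hD)]
end

section
/- Under condition (Ω), the maximum of the four values 2b₁b₂b₃−b₁b₂a₃, a₁b₂b₃+b₁a₂b₃−a₁a₂a₃, b₁a₂b₃+b₁b₂b₃−b₁a₂a₃, and a₁b₂b₃+b₁b₂b₃−a₁b₂a₃ equals 2b₁b₂b₃−b₁b₂a₃. -/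
theorem lem_z7
    (a₁ a₂ a₃ b₁ b₂ b₃ : ℝ)
    (ha₁ : 0 ≤ a₁) (ha₂ : 0 ≤ a₂) (ha₃ : 0 ≤ a₃)
    (hab₁ : a₁ < b₁) (hab₂ : a₂ < b₂) (hab₃ : a₃ < b₃)
    (hΩ₁ : a₁*b₂*b₃ + b₁*a₂*a₃ ≤ b₁*a₂*b₃ + a₁*b₂*a₃)
    (hΩ₂ : b₁*a₂*b₃ + a₁*b₂*a₃ ≤ b₁*b₂*a₃ + a₁*a₂*b₃) :
    max (max (2*(b₁*b₂*b₃) - b₁*b₂*a₃) (a₁*b₂*b₃ + b₁*a₂*b₃ - a₁*a₂*a₃)) (max (b₁*a₂*b₃ + b₁*b₂*b₃ - b₁*a₂*a₃) (a₁*b₂*b₃ + b₁*b₂*b₃ - a₁*b₂*a₃)) = 2*(b₁*b₂*b₃) - b₁*b₂*a₃ := by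
  have h2 : a₁*b₂*b₃ + b₁*a₂*b₃ - a₁*a₂*a₃ ≤ 2*(b₁*b₂*b₃) - b₁*b₂*a₃ := by
    nlinarith [mul_pos (sub_pos.2 hab₁) (sub_pos.2 hab₂), mul_pos (sub_pos.2 hab₂) (sub_pos.2 hab₃), mul_pos (sub_pos.2 hab₁) (sub_pos.2 hab₃), mul_nonneg (mul_nonneg ha₁ ha₂) ha₃, mul_nonneg (mul_nonneg ha₁ ha₂) (le_of_lt (lt_of_le_of_lt ha₃ hab₃)), mul_nonneg (mul_nonneg (le_of_lt (lt_of_le_of_lt ha₁ hab₁)) (le_of_lt (lt_of_le_of_lt ha₂ hab₂))) (sub_pos.2 hab₃).le, mul_nonneg (sub_pos.2 hab₁).le (mul_nonneg (sub_pos.2 hab₂).le (le_of_lt (lt_of_le_of_lt ha₃ hab₃)))]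
  have h3 : b₁*a₂*b₃ + b₁*b₂*b₃ - b₁*a₂*a₃ ≤ 2*(b₁*b₂*b₃) - b₁*b₂*a₃ := by
    nlinarith [mul_nonneg (mul_nonneg (le_of_lt (lt_of_le_of_lt ha₁ hab₁)) (sub_pos.2 hab₂).le) (sub_pos.2 hab₃).le]
  have h4 : a₁*b₂*b₃ + b₁*b₂*b₃ - a₁*b₂*a₃ ≤ 2*(b₁*b₂*b₃) - b₁*b₂*a₃ := by
    nlinarith [mul_nonneg (mul_nonneg (sub_pos.2 hab₁).le (le_of_lt (lt_of_le_of_lt ha₂ hab₂))) (sub_pos.2 hab₃).le]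
  rw [max_eq_left h2, max_eq_left (max_le h3 h4)]
end

section
/- Under condition (Ω), the maximum of the four values a₁b₂b₃+b₁a₂b₃−b₁b₂a₃, 2a₁a₂b₃−a₁a₂a₃, a₁a₂b₃+b₁a₂b₃−b₁a₂a₃, and a₁a₂b₃+a₁b₂b₃−a₁b₂a₃ equals a₁a₂b₃+b₁a₂b₃−b₁a₂a₃. -/
theorem lem_z8
    (a₁ a₂ a₃ b₁ b₂ b₃ : ℝ)
    (ha₁ : 0 ≤ a₁) (ha₂ : 0 ≤ a₂) (ha₃ : 0 ≤ a₃)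
    (hab₁ : a₁ < b₁) (hab₂ : a₂ < b₂) (hab₃ : a₃ < b₃)
    (hΩ₁ : a₁*b₂*b₃ + b₁*a₂*a₃ ≤ b₁*a₂*b₃ + a₁*b₂*a₃)
    (hΩ₂ : b₁*a₂*b₃ + a₁*b₂*a₃ ≤ b₁*b₂*a₃ + a₁*a₂*b₃) :
    max (max (a₁*b₂*b₃ + b₁*a₂*b₃ - b₁*b₂*a₃) (2*(a₁*a₂*b₃) - a₁*a₂*a₃)) (max (a₁*a₂*b₃ + b₁*a₂*b₃ - b₁*a₂*a₃) (a₁*a₂*b₃ + a₁*b₂*b₃ - a₁*b₂*a₃)) = a₁*a₂*b₃ + b₁*a₂*b₃ - b₁*a₂*a₃ := by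
  have h1 : a₁*b₂*b₃ + b₁*a₂*b₃ - b₁*b₂*a₃ ≤ a₁*a₂*b₃ + b₁*a₂*b₃ - b₁*a₂*a₃ := by linarith
  have h2 : 2*(a₁*a₂*b₃) - a₁*a₂*a₃ ≤ a₁*a₂*b₃ + b₁*a₂*b₃ - b₁*a₂*a₃ := by
    nlinarith [mul_nonneg (mul_nonneg ha₂ (sub_nonneg.2 hab₁.le)) (sub_nonneg.2 hab₃.le)]
  have h4 : a₁*a₂*b₃ + a₁*b₂*b₃ - a₁*b₂*a₃ ≤ a₁*a₂*b₃ + b₁*a₂*b₃ - b₁*a₂*a₃ := by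
    nlinarith [mul_nonneg (sub_nonneg.2 hab₃.le) (by nlinarith : (0:ℝ) ≤ b₁*a₂ - a₁*b₂)]
  exact le_antisymm (max_le (max_le h1 h2) (max_le le_rfl h4))
    (le_trans (le_max_left _ _) (le_max_right _ _))
end

section
/- The convex hull P of {(x₁x₂x₃, x₁, x₂, x₃) : xᵢ ∈ [aᵢ,bᵢ]} equals the convex hull of the 8 points obtained by choosing each xᵢ ∈ {aᵢ, bᵢ}; i.e., the extreme points of P are exactly among the vertices of the box. -/
/-!
The map `x ↦ (x₁x₂x₃, x₁, x₂, x₃)` is affine in each coordinate separately. So, with the other two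
coordinates fixed, the points over `xᵢ ∈ [aᵢ, bᵢ]` lie on the segment joining the points over `aᵢ`
and `bᵢ`. Replacing the intervals by their endpoints one coordinate at a time does not change the
convex hull.
-/

open Set

section Segment

variable {E : Type*} [AddCommGroup E] [Module ℝ E]

theorem add_smul_mem_convexHull {s : Set E} {u v : E} {a b x : ℝ}
    (ha : u + a • v ∈ s) (hb : u + b • v ∈ s) (hx : x ∈ Icc a b) :
    u + x • v ∈ convexHull ℝ s := by
  have hline : ∀ t : ℝ, AffineMap.lineMap u (u + v) t = u + t • v := fun t => by
    rw [AffineMap.lineMap_apply_module', add_sub_cancel_left, add_comm]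
  have hseg : u + x • v ∈ convexHull ℝ {u + a • v, u + b • v} := by
    rw [convexHull_pair, ← hline, ← hline, ← hline, ← image_segment]
    exact mem_image_of_mem _ (segment_eq_uIcc a b ▸ Icc_subset_uIcc hx)
  exact convexHull_mono (insert_subset_iff.2 ⟨ha, singleton_subset_iff.2 hb⟩) hseg

end Segment

section CubicGraph

def cubicPoint (x₁ x₂ x₃ : ℝ) : EuclideanSpace ℝ (Fin 4) :=
  WithLp.toLp 2 ![x₁*x₂*x₃, x₁, x₂, x₃]

-- Spelled as in the theorem, so that `change` applies; the equation there is `p.ofLp = ![…]`.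
def cubicGraph (A₁ A₂ A₃ : Set ℝ) : Set (EuclideanSpace ℝ (Fin 4)) :=
  {p | ∃ x₁ ∈ A₁, ∃ x₂ ∈ A₂, ∃ x₃ ∈ A₃, p = ![x₁*x₂*x₃, x₁, x₂, x₃]}

variable {A₁ A₂ A₃ : Set ℝ} {a b : ℝ}

theorem mem_cubicGraph {p : EuclideanSpace ℝ (Fin 4)} :
    p ∈ cubicGraph A₁ A₂ A₃ ↔ ∃ x₁ ∈ A₁, ∃ x₂ ∈ A₂, ∃ x₃ ∈ A₃, cubicPoint x₁ x₂ x₃ = p := by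
  simp only [cubicGraph, cubicPoint, mem_ofPred_eq, WithLp.ext_iff, eq_comm]

theorem cubicPoint_mem_cubicGraph {x₁ x₂ x₃ : ℝ} (h₁ : x₁ ∈ A₁) (h₂ : x₂ ∈ A₂) (h₃ : x₃ ∈ A₃) :
    cubicPoint x₁ x₂ x₃ ∈ cubicGraph A₁ A₂ A₃ :=
  mem_cubicGraph.2 ⟨x₁, h₁, x₂, h₂, x₃, h₃, rfl⟩

theorem cubicGraph_mono {B₁ B₂ B₃ : Set ℝ} (h₁ : A₁ ⊆ B₁) (h₂ : A₂ ⊆ B₂) (h₃ : A₃ ⊆ B₃) :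
    cubicGraph A₁ A₂ A₃ ⊆ cubicGraph B₁ B₂ B₃ := by
  rintro p ⟨x₁, hx₁, x₂, hx₂, x₃, hx₃, hp⟩
  exact ⟨x₁, h₁ hx₁, x₂, h₂ hx₂, x₃, h₃ hx₃, hp⟩

theorem cubicPoint_eq_add_smul_fst (x₁ x₂ x₃ : ℝ) :
    cubicPoint x₁ x₂ x₃ = cubicPoint 0 x₂ x₃ + x₁ • WithLp.toLp 2 ![x₂*x₃, 1, 0, 0] := by
  ext i; fin_cases i <;> simp [cubicPoint]; ring

theorem cubicPoint_eq_add_smul_snd (x₁ x₂ x₃ : ℝ) :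
    cubicPoint x₁ x₂ x₃ = cubicPoint x₁ 0 x₃ + x₂ • WithLp.toLp 2 ![x₁*x₃, 0, 1, 0] := by
  ext i; fin_cases i <;> simp [cubicPoint]; ring

theorem cubicPoint_eq_add_smul_thd (x₁ x₂ x₃ : ℝ) :
    cubicPoint x₁ x₂ x₃ = cubicPoint x₁ x₂ 0 + x₃ • WithLp.toLp 2 ![x₁*x₂, 0, 0, 1] := by
  ext i; fin_cases i <;> simp [cubicPoint]; ring

theorem pair_subset_Icc (hab : a ≤ b) : ({a, b} : Set ℝ) ⊆ Icc a b :=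
  insert_subset_iff.2 ⟨left_mem_Icc.2 hab, singleton_subset_iff.2 (right_mem_Icc.2 hab)⟩

theorem convexHull_cubicGraph_Icc_fst (hab : a ≤ b) :
    convexHull ℝ (cubicGraph (Icc a b) A₂ A₃) = convexHull ℝ (cubicGraph {a, b} A₂ A₃) := by
  refine le_antisymm (convexHull_min ?_ (convex_convexHull ℝ _))
    (convexHull_mono (cubicGraph_mono (pair_subset_Icc hab) subset_rfl subset_rfl))
  intro p hp
  obtain ⟨x₁, hx₁, x₂, hx₂, x₃, hx₃, rfl⟩ := mem_cubicGraph.1 hp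
  rw [cubicPoint_eq_add_smul_fst]
  refine add_smul_mem_convexHull ?_ ?_ hx₁ <;> rw [← cubicPoint_eq_add_smul_fst] <;>
    exact cubicPoint_mem_cubicGraph (by simp) hx₂ hx₃

theorem convexHull_cubicGraph_Icc_snd (hab : a ≤ b) :
    convexHull ℝ (cubicGraph A₁ (Icc a b) A₃) = convexHull ℝ (cubicGraph A₁ {a, b} A₃) := by
  refine le_antisymm (convexHull_min ?_ (convex_convexHull ℝ _))
    (convexHull_mono (cubicGraph_mono subset_rfl (pair_subset_Icc hab) subset_rfl))
  intro p hp
  obtain ⟨x₁, hx₁, x₂, hx₂, x₃, hx₃, rfl⟩ := mem_cubicGraph.1 hp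
  rw [cubicPoint_eq_add_smul_snd]
  refine add_smul_mem_convexHull ?_ ?_ hx₂ <;> rw [← cubicPoint_eq_add_smul_snd] <;>
    exact cubicPoint_mem_cubicGraph hx₁ (by simp) hx₃

theorem convexHull_cubicGraph_Icc_thd (hab : a ≤ b) :
    convexHull ℝ (cubicGraph A₁ A₂ (Icc a b)) = convexHull ℝ (cubicGraph A₁ A₂ {a, b}) := by
  refine le_antisymm (convexHull_min ?_ (convex_convexHull ℝ _))
    (convexHull_mono (cubicGraph_mono subset_rfl subset_rfl (pair_subset_Icc hab)))
  intro p hp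
  obtain ⟨x₁, hx₁, x₂, hx₂, x₃, hx₃, rfl⟩ := mem_cubicGraph.1 hp
  rw [cubicPoint_eq_add_smul_thd]
  refine add_smul_mem_convexHull ?_ ?_ hx₃ <;> rw [← cubicPoint_eq_add_smul_thd] <;>
    exact cubicPoint_mem_cubicGraph hx₁ hx₂ (by simp)

end CubicGraph

theorem convexhull_graph_eq_hull_vertices_general
    (a₁ a₂ a₃ b₁ b₂ b₃ : ℝ)
    (hab₁ : a₁ < b₁) (hab₂ : a₂ < b₂) (hab₃ : a₃ < b₃) :
    convexHull ℝ
      ({p : EuclideanSpace ℝ (Fin 4) |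
        ∃ x₁ ∈ Set.Icc a₁ b₁, ∃ x₂ ∈ Set.Icc a₂ b₂, ∃ x₃ ∈ Set.Icc a₃ b₃,
          p = ![x₁*x₂*x₃, x₁, x₂, x₃]}) =
    convexHull ℝ
      ({p : EuclideanSpace ℝ (Fin 4) |
        ∃ x₁ ∈ ({a₁, b₁} : Set ℝ), ∃ x₂ ∈ ({a₂, b₂} : Set ℝ),
          ∃ x₃ ∈ ({a₃, b₃} : Set ℝ), p = ![x₁*x₂*x₃, x₁, x₂, x₃]}) := by
  change convexHull ℝ (cubicGraph (Icc a₁ b₁) (Icc a₂ b₂) (Icc a₃ b₃)) =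
    convexHull ℝ (cubicGraph {a₁, b₁} {a₂, b₂} {a₃, b₃})
  rw [convexHull_cubicGraph_Icc_fst hab₁.le, convexHull_cubicGraph_Icc_snd hab₂.le,
    convexHull_cubicGraph_Icc_thd hab₃.le]

theorem convexhull_graph_eq_hull_vertices
    (a₁ a₂ a₃ b₁ b₂ b₃ : ℝ)
    (ha₁ : 0 ≤ a₁) (ha₂ : 0 ≤ a₂) (ha₃ : 0 ≤ a₃)
    (hab₁ : a₁ < b₁) (hab₂ : a₂ < b₂) (hab₃ : a₃ < b₃) :
    convexHull ℝ
      ({p : EuclideanSpace ℝ (Fin 4) |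
        ∃ x₁ ∈ Set.Icc a₁ b₁, ∃ x₂ ∈ Set.Icc a₂ b₂, ∃ x₃ ∈ Set.Icc a₃ b₃,
          p = ![x₁*x₂*x₃, x₁, x₂, x₃]}) =
    convexHull ℝ
      ({p : EuclideanSpace ℝ (Fin 4) |
        ∃ x₁ ∈ ({a₁, b₁} : Set ℝ), ∃ x₂ ∈ ({a₂, b₂} : Set ℝ),
          ∃ x₃ ∈ ({a₃, b₃} : Set ℝ), p = ![x₁*x₂*x₃, x₁, x₂, x₃]}) :=
  convexhull_graph_eq_hull_vertices_general a₁ a₂ a₃ b₁ b₂ b₃ hab₁ hab₂ hab₃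
end

section
/- Under condition (Ω), each of the three products (b₃−a₃)(b₁a₂−a₁b₂), (b₂−a₂)(b₁a₃−a₁b₃), and (b₁−a₁)(b₂a₃−a₂b₃) is nonnegative. -/
theorem omega_products_nonneg
    (a₁ a₂ a₃ b₁ b₂ b₃ : ℝ)
    (ha₁ : 0 ≤ a₁) (ha₂ : 0 ≤ a₂) (ha₃ : 0 ≤ a₃)
    (hab₁ : a₁ < b₁) (hab₂ : a₂ < b₂) (hab₃ : a₃ < b₃)
    (hΩ₁ : a₁*b₂*b₃ + b₁*a₂*a₃ ≤ b₁*a₂*b₃ + a₁*b₂*a₃)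
    (hΩ₂ : b₁*a₂*b₃ + a₁*b₂*a₃ ≤ b₁*b₂*a₃ + a₁*a₂*b₃) :
    0 ≤ (b₃-a₃)*(b₁*a₂-a₁*b₂) ∧ 0 ≤ (b₂-a₂)*(b₁*a₃-a₁*b₃) ∧
    0 ≤ (b₁-a₁)*(b₂*a₃-a₂*b₃) := by
  refine ⟨by nlinarith, by nlinarith, by nlinarith⟩
end
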